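/- Let X and Y be real Hilbert spaces, A : X → Y a continuous linear map, b ∈ Y, S x = A x + b, u^δ ∈ Y and x* ∈ X. Let (α_n) be a sequence of positive reals with α_n → 0, and for each n let x_n be a minimizer of J_{α_n}(x) = ‖S x − u^δ‖² + α_n ‖x − x*‖² over X. Then for every x ∈ X, limsup_{n→∞} ‖S x_n − u^δ‖ ≤ ‖S x − u^δ‖; consequently ‖S x_n − u^δ‖ converges to inf_{x ∈ X} ‖S x − u^δ‖. -/

import Mathlib

/-!
Comparing the minimizer `x_n` with an arbitrary competitor `x` and dropping the nonnegative
penalty of `x_n` gives `‖S x_n − u^δ‖² ≤ ‖S x − u^δ‖² + α_n ‖x − x*‖²`, whose right-hand side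
tends to `‖S x − u^δ‖²`. Hence the residuals eventually drop below every value exceeding the
residual of any fixed `x`, which is both the `limsup` bound and, with `x` chosen nearly optimal,
convergence to the infimum. Linearity of `S` plays no role.
-/

open Filter Topology

section TikhonovMinimizers

variable {ι X : Type*} {l : Filter ι} {r p : X → ℝ} {α : ι → ℝ} {xseq : ι → X}

theorem eventually_lt_of_tikhonov_minimizer (hp : ∀ x, 0 ≤ p x) (hα : ∀ i, 0 ≤ α i)
    (hα0 : Tendsto α l (𝓝 0))
    (hmin : ∀ i x, r (xseq i) ^ 2 + α i * p (xseq i) ≤ r x ^ 2 + α i * p x)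
    {x : X} {a : ℝ} (hx₀ : 0 ≤ r x) (hxa : r x < a) :
    ∀ᶠ i in l, r (xseq i) < a := by
  have ha : 0 ≤ a := hx₀.trans hxa.le
  have hsq : r x ^ 2 < a ^ 2 := pow_lt_pow_left₀ hxa hx₀ two_ne_zero
  have hbound : Tendsto (fun i => r x ^ 2 + α i * p x) l (𝓝 (r x ^ 2)) := by
    simpa using tendsto_const_nhds.add (hα0.mul_const (p x))
  filter_upwards [hbound.eventually (gt_mem_nhds hsq)] with i hi
  have hcompare : r (xseq i) ^ 2 ≤ r x ^ 2 + α i * p x := by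
    nlinarith [hmin i x, mul_nonneg (hα i) (hp (xseq i))]
  exact lt_of_pow_lt_pow_left₀ 2 ha (hcompare.trans_lt hi)

theorem limsup_le_of_forall_eventually_lt [l.NeBot] {u : ι → ℝ} {c : ℝ}
    (hu : l.IsBoundedUnder (· ≥ ·) u) (h : ∀ a, c < a → ∀ᶠ i in l, u i < a) :
    limsup u l ≤ c :=
  le_of_forall_gt_imp_ge_of_dense fun a ha =>
    limsup_le_of_le hu.isCoboundedUnder_le ((h a ha).mono fun _ => le_of_lt)

theorem tendsto_iInf_of_forall_eventually_lt [Nonempty X] (hr : BddBelow (Set.range r))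
    (h : ∀ x a, r x < a → ∀ᶠ i in l, r (xseq i) < a) :
    Tendsto (fun i => r (xseq i)) l (𝓝 (⨅ x, r x)) := by
  refine tendsto_order.2 ⟨fun a ha => Eventually.of_forall fun i => ?_, fun a ha => ?_⟩
  · exact ha.trans_le (ciInf_le hr (xseq i))
  · obtain ⟨x, hx⟩ := exists_lt_of_ciInf_lt ha
    exact h x a hx

end TikhonovMinimizers

theorem tikhonov_residual_tendsto_inf_general
    {X Y : Type*}
    [NormedAddCommGroup X] [InnerProductSpace ℝ X]
    [NormedAddCommGroup Y] [InnerProductSpace ℝ Y]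
    (A : X →L[ℝ] Y) (b uδ : Y) (xstar : X)
    (α : ℕ → ℝ) (hαpos : ∀ n, 0 < α n) (hα0 : Tendsto α atTop (nhds 0))
    (xseq : ℕ → X)
    (hmin : ∀ n, ∀ x : X,
      ‖A (xseq n) + b - uδ‖ ^ 2 + α n * ‖xseq n - xstar‖ ^ 2
        ≤ ‖A x + b - uδ‖ ^ 2 + α n * ‖x - xstar‖ ^ 2) :
    (∀ x : X,
        limsup (fun n => ‖A (xseq n) + b - uδ‖) atTop ≤ ‖A x + b - uδ‖) ∧
    Tendsto (fun n => ‖A (xseq n) + b - uδ‖) atTop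
      (nhds (⨅ x : X, ‖A x + b - uδ‖)) := by
  have hres : ∀ x a, ‖A x + b - uδ‖ < a → ∀ᶠ n in atTop, ‖A (xseq n) + b - uδ‖ < a :=
    fun _ _ hxa => eventually_lt_of_tikhonov_minimizer (r := fun x => ‖A x + b - uδ‖)
      (p := fun x => ‖x - xstar‖ ^ 2) (xseq := xseq) (fun _ => sq_nonneg _)
      (fun n => (hαpos n).le) hα0 hmin (norm_nonneg _) hxa
  refine ⟨fun x => limsup_le_of_forall_eventually_lt
    (isBoundedUnder_of ⟨0, fun _ => norm_nonneg _⟩) (hres x), ?_⟩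
  exact tendsto_iInf_of_forall_eventually_lt (r := fun x => ‖A x + b - uδ‖)
    ⟨0, by rintro _ ⟨x, rfl⟩; exact norm_nonneg _⟩ hres

/-- If `α_n → 0` with `α_n > 0` and `x_n` minimizes the Tikhonov functional
`J_{α_n}(x) = ‖A x + b − u^δ‖² + α_n‖x − x*‖²`, then for every `x ∈ X`
`limsup ‖A x_n + b − u^δ‖ ≤ ‖A x + b − u^δ‖`, and consequently `‖A x_n + b − u^δ‖`
converges to `inf_{x ∈ X} ‖A x + b − u^δ‖`. -/
theorem tikhonov_residual_tendsto_inf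
    {X Y : Type*}
    [NormedAddCommGroup X] [InnerProductSpace ℝ X] [CompleteSpace X]
    [NormedAddCommGroup Y] [InnerProductSpace ℝ Y] [CompleteSpace Y]
    (A : X →L[ℝ] Y) (b uδ : Y) (xstar : X)
    (α : ℕ → ℝ) (hαpos : ∀ n, 0 < α n) (hα0 : Tendsto α atTop (nhds 0))
    (xseq : ℕ → X)
    (hmin : ∀ n, ∀ x : X,
      ‖A (xseq n) + b - uδ‖ ^ 2 + α n * ‖xseq n - xstar‖ ^ 2
        ≤ ‖A x + b - uδ‖ ^ 2 + α n * ‖x - xstar‖ ^ 2) :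
    (∀ x : X,
        limsup (fun n => ‖A (xseq n) + b - uδ‖) atTop ≤ ‖A x + b - uδ‖) ∧
    Tendsto (fun n => ‖A (xseq n) + b - uδ‖) atTop
      (nhds (⨅ x : X, ‖A x + b - uδ‖)) :=
  tikhonov_residual_tendsto_inf_general A b uδ xstar α hαpos hα0 xseq hmin
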